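/- arXiv:2509.04591 — 2 statements merged into one kernel-verified Lean document; each statement's English description precedes it below -/
import Mathlib

section
/- Let q be a positive integer with q ≡ 3 (mod 8), let j be an integer with j² ≡ −2 (mod q), and let (x1, x2, x3, x4) ∈ ℤ⁴ be a nonzero tuple satisfying x3 ≡ −2·x1 + j·(2·x2 + x4) (mod q). Then (2x1 + x3)² + 2·(2x2 + x4)² + q·(x3² + 2·x4²) ≥ 4·q. -/
/-!
With `a = 2x1 + x3` and `b = 2x2 + x4` the form is `a² + 2b² + q(x3² + 2x4²)`. The congruence gives
`a ≡ j b (mod q)`, hence `a² + 2b² ≡ (j² + 2) b² ≡ 0 (mod q)`, so `q` divides the form. Modulo `4`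
we have `a² + 2b² ≡ x3² + 2x4²`, so the form is `≡ (1 + q)(x3² + 2x4²) ≡ 0 (mod 4)` as `q ≡ 3 (mod 4)`.
Since `q` is odd, `4q` divides the form, which is positive on nonzero tuples.
-/

section QuadraticForm

variable (q x1 x2 x3 x4 : ℤ)

lemma quadForm_pos (hq : 0 < q) (hx0 : ¬ (x1 = 0 ∧ x2 = 0 ∧ x3 = 0 ∧ x4 = 0)) :
    0 < (2 * x1 + x3) ^ 2 + 2 * (2 * x2 + x4) ^ 2 + q * (x3 ^ 2 + 2 * x4 ^ 2) := by
  by_cases h34 : x3 = 0 ∧ x4 = 0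
  · obtain ⟨rfl, rfl⟩ := h34
    have h12 : x1 ≠ 0 ∨ x2 ≠ 0 := by tauto
    simp only [add_zero, ne_eq, two_ne_zero, not_false_eq_true, zero_pow, mul_zero]
    rcases h12 with h | h <;> positivity
  · have h34' : x3 ≠ 0 ∨ x4 ≠ 0 := by tauto
    have hc : 0 < x3 ^ 2 + 2 * x4 ^ 2 := by rcases h34' with h | h <;> positivity
    positivity

lemma dvd_quadForm {j : ℤ} (hj : j ^ 2 ≡ -2 [ZMOD q])
    (hx : x3 ≡ -2 * x1 + j * (2 * x2 + x4) [ZMOD q]) :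
    q ∣ (2 * x1 + x3) ^ 2 + 2 * (2 * x2 + x4) ^ 2 + q * (x3 ^ 2 + 2 * x4 ^ 2) := by
  have ha : 2 * x1 + x3 ≡ j * (2 * x2 + x4) [ZMOD q] := by
    simpa using hx.add_left (2 * x1)
  have hab : (2 * x1 + x3) ^ 2 + 2 * (2 * x2 + x4) ^ 2 ≡ 0 [ZMOD q] :=
    calc (2 * x1 + x3) ^ 2 + 2 * (2 * x2 + x4) ^ 2
        ≡ j ^ 2 * (2 * x2 + x4) ^ 2 + 2 * (2 * x2 + x4) ^ 2 [ZMOD q] := by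
          simpa [mul_pow] using (ha.pow 2).add_right (2 * (2 * x2 + x4) ^ 2)
      _ ≡ -2 * (2 * x2 + x4) ^ 2 + 2 * (2 * x2 + x4) ^ 2 [ZMOD q] :=
          (hj.mul_right _).add_right _
      _ = 0 := by ring
  exact dvd_add (Int.modEq_zero_iff_dvd.mp hab) (dvd_mul_right q _)

lemma four_dvd_quadForm (hq4 : q % 4 = 3) :
    4 ∣ (2 * x1 + x3) ^ 2 + 2 * (2 * x2 + x4) ^ 2 + q * (x3 ^ 2 + 2 * x4 ^ 2) := by
  obtain ⟨m, rfl⟩ : ∃ m, q = 4 * m + 3 := ⟨q / 4, by omega⟩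
  exact ⟨x1 ^ 2 + x1 * x3 + 2 * x2 ^ 2 + 2 * x2 * x4 + (m + 1) * (x3 ^ 2 + 2 * x4 ^ 2), by ring⟩

end QuadraticForm

lemma isCoprime_four_of_emod_four_eq_three {q : ℤ} (hq4 : q % 4 = 3) : IsCoprime 4 q :=
  ⟨q / 4 + 1, -1, by omega⟩

/-- Let `q ≡ 3 (mod 8)` be positive, `j² ≡ −2 (mod q)`, and `(x1,x2,x3,x4) ∈ ℤ⁴` nonzero
with `x3 ≡ −2x1 + j(2x2+x4) (mod q)`. Then
`(2x1+x3)² + 2(2x2+x4)² + q(x3² + 2x4²) ≥ 4q`. -/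
theorem stmt_9 (q : ℤ) (hq : 0 < q) (hq8 : q % 8 = 3) (j : ℤ) (hj : j ^ 2 ≡ -2 [ZMOD q])
    (x1 x2 x3 x4 : ℤ) (hx0 : ¬ (x1 = 0 ∧ x2 = 0 ∧ x3 = 0 ∧ x4 = 0))
    (hx : x3 ≡ -2 * x1 + j * (2 * x2 + x4) [ZMOD q]) :
    4 * q ≤ (2 * x1 + x3) ^ 2 + 2 * (2 * x2 + x4) ^ 2 + q * (x3 ^ 2 + 2 * x4 ^ 2) := by
  have hq4 : q % 4 = 3 := by omega
  have hdvd := (isCoprime_four_of_emod_four_eq_three hq4).mul_dvd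
    (four_dvd_quadForm q x1 x2 x3 x4 hq4) (dvd_quadForm q x1 x2 x3 x4 hj hx)
  exact Int.le_of_dvd (quadForm_pos q x1 x2 x3 x4 hq hx0) hdvd
end

section
/- Let q be a positive integer with q ≡ 3 (mod 8), let j be an integer with j² ≡ −2 (mod q), and let (x1, x2, x3, x4) ∈ ℤ⁴ be nonzero with x3 ≡ −2·x1 + j·(2·x2 + x4) (mod q). Define the complex numbers z = (x1 + x2·√2 + x3/2 + x4·√2/2) + (√q·(x3 + x4·√2)/2)·i and w = (x1 − x2·√2 + x3/2 − x4·√2/2) + (√q·(x3 − x4·√2)/2)·i. Then |z|² + |w|² ≥ 2·q. -/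
private lemma one_le_sq' {A : ℤ} (h : A ≠ 0) : 1 ≤ A ^ 2 := by
  rcases h.lt_or_gt with h | h <;> nlinarith

private lemma odd_sq8 {A : ℤ} (h : A % 2 = 1) : ∃ u, A ^ 2 = 8 * u + 1 := by
  obtain ⟨a, rfl⟩ : ∃ a, A = 2 * a + 1 := ⟨A / 2, by omega⟩
  rcases Int.even_or_odd a with ⟨c, rfl⟩ | ⟨c, rfl⟩
  · exact ⟨2 * c ^ 2 + c, by ring⟩
  · exact ⟨2 * c ^ 2 + 3 * c + 1, by ring⟩

/-- Case x3,x4 both even parity class (x3=x4=0): S ≥ 4q. -/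
private lemma case00 (q A B k : ℤ) (hq : 0 < q) (hq8 : q % 8 = 3)
    (hk : A ^ 2 + 2 * B ^ 2 = q * k) (hA : A % 2 = 0) (hB : B % 2 = 0)
    (h0 : ¬(A = 0 ∧ B = 0)) : 4 * q ≤ A ^ 2 + 2 * B ^ 2 := by
  obtain ⟨a, rfl⟩ : ∃ a, A = 2 * a := ⟨A / 2, by omega⟩
  obtain ⟨b, rfl⟩ : ∃ b, B = 2 * b := ⟨B / 2, by omega⟩
  have hk0 : 0 ≤ k := by nlinarith
  have hk4 : 4 ≤ k := by
    by_contra hc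
    push_neg at hc
    interval_cases k
    · have ha : a = 0 := by nlinarith
      have hb : b = 0 := by nlinarith
      exact h0 ⟨by omega, by omega⟩
    · have : (4 : ℤ) ∣ q := ⟨a ^ 2 + 2 * b ^ 2, by linarith⟩
      omega
    · have : (2 : ℤ) ∣ q := ⟨a ^ 2 + 2 * b ^ 2, by linarith⟩
      omega
    · have : (4 : ℤ) ∣ 3 * q := ⟨a ^ 2 + 2 * b ^ 2, by linarith⟩
      omega
  nlinarith

/-- Case A odd, B even (x3 odd, x4 even): S ≥ 3q. -/
private lemma case10 (q A B k : ℤ) (hq : 0 < q) (hq8 : q % 8 = 3)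
    (hk : A ^ 2 + 2 * B ^ 2 = q * k) (hA : A % 2 = 1) (hB : B % 2 = 0) :
    3 * q ≤ A ^ 2 + 2 * B ^ 2 := by
  obtain ⟨b, rfl⟩ : ∃ b, B = 2 * b := ⟨B / 2, by omega⟩
  obtain ⟨u, hu⟩ := odd_sq8 hA
  have hv : 2 * (2 * b) ^ 2 = 8 * b ^ 2 := by ring
  have hk0 : 0 ≤ k := by nlinarith
  have hk3 : 3 ≤ k := by
    by_contra hc
    push_neg at hc
    have hb2 : 0 ≤ b ^ 2 := sq_nonneg b
    obtain ⟨v, hv2⟩ : ∃ v, b ^ 2 = v := ⟨_, rfl⟩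
    interval_cases k <;> omega
  nlinarith

/-- Case A even, B odd (x3 even, x4 odd): S ≥ 2q. -/
private lemma case01 (q A B k : ℤ) (hq : 0 < q) (hq8 : q % 8 = 3)
    (hk : A ^ 2 + 2 * B ^ 2 = q * k) (hA : A % 2 = 0) (hB : B % 2 = 1) :
    2 * q ≤ A ^ 2 + 2 * B ^ 2 := by
  obtain ⟨a, rfl⟩ : ∃ a, A = 2 * a := ⟨A / 2, by omega⟩
  have hB1 : 1 ≤ B ^ 2 := one_le_sq' (by omega)
  have hk0 : 0 ≤ k := by nlinarith
  have hk2 : 2 ≤ k := by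
    by_contra hc
    push_neg at hc
    interval_cases k
    · nlinarith
    · have : (2 : ℤ) ∣ q := ⟨2 * a ^ 2 + B ^ 2, by linarith⟩
      omega
  nlinarith

/-- Case A odd, B odd: S ≥ q. -/
private lemma case11 (q A B k : ℤ) (hq : 0 < q)
    (hk : A ^ 2 + 2 * B ^ 2 = q * k) (hA : A % 2 = 1) :
    q ≤ A ^ 2 + 2 * B ^ 2 := by
  have hA1 : 1 ≤ A ^ 2 := one_le_sq' (by omega)
  have hk0 : 0 ≤ k := by nlinarith
  have hk1 : 1 ≤ k := by
    by_contra hc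
    push_neg at hc
    interval_cases k
    nlinarith
  nlinarith

private lemma keylem (q A B x3 x4 : ℤ) (hq : 0 < q) (hq8 : q % 8 = 3)
    (hqS : q ∣ A ^ 2 + 2 * B ^ 2) (hA : A % 2 = x3 % 2) (hB : B % 2 = x4 % 2)
    (h0 : ¬(A = 0 ∧ B = 0 ∧ x3 = 0 ∧ x4 = 0)) :
    4 * q ≤ A ^ 2 + 2 * B ^ 2 + q * (x3 ^ 2 + 2 * x4 ^ 2) := by
  obtain ⟨k, hk⟩ := hqS
  have hS0 : 0 ≤ A ^ 2 + 2 * B ^ 2 := by positivity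
  by_cases hT : 4 ≤ x3 ^ 2 + 2 * x4 ^ 2
  · nlinarith
  push_neg at hT
  have h3b : -1 ≤ x3 ∧ x3 ≤ 1 := by
    constructor <;> nlinarith [sq_nonneg x4]
  have h4b : -1 ≤ x4 ∧ x4 ≤ 1 := by
    constructor <;> nlinarith [sq_nonneg x3]
  obtain ⟨h3l, h3r⟩ := h3b
  obtain ⟨h4l, h4r⟩ := h4b
  interval_cases x3 <;> interval_cases x4
  · nlinarith [case11 q A B k hq hk (by omega)]
  · nlinarith [case10 q A B k hq hq8 hk (by omega) (by omega)]
  · nlinarith [case11 q A B k hq hk (by omega)]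
  · nlinarith [case01 q A B k hq hq8 hk (by omega) (by omega)]
  · nlinarith [case00 q A B k hq hq8 hk (by omega) (by omega) (by omega)]
  · nlinarith [case01 q A B k hq hq8 hk (by omega) (by omega)]
  · nlinarith [case11 q A B k hq hk (by omega)]
  · nlinarith [case10 q A B k hq hq8 hk (by omega) (by omega)]
  · nlinarith [case11 q A B k hq hk (by omega)]

/-- Let `q ≡ 3 (mod 8)` be a positive integer, `j² ≡ −2 (mod q)`, and `(x1,x2,x3,x4) ∈ ℤ⁴`
nonzero with `x3 ≡ −2x1 + j(2x2+x4) (mod q)`. With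
`z = (x1 + x2√2 + x3/2 + x4√2/2) + (√q (x3 + x4√2)/2) i` and
`w = (x1 − x2√2 + x3/2 − x4√2/2) + (√q (x3 − x4√2)/2) i`, we have `|z|² + |w|² ≥ 2q`. -/
theorem stmt_10 (q : ℤ) (hq : 0 < q) (hq8 : q % 8 = 3) (j : ℤ) (hj : j ^ 2 ≡ -2 [ZMOD q])
    (x1 x2 x3 x4 : ℤ) (hx0 : ¬ (x1 = 0 ∧ x2 = 0 ∧ x3 = 0 ∧ x4 = 0))
    (hx : x3 ≡ -2 * x1 + j * (2 * x2 + x4) [ZMOD q])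
    (z w : ℂ)
    (hz : z = (((x1 : ℝ) + (x2 : ℝ) * Real.sqrt 2 + (x3 : ℝ) / 2
          + (x4 : ℝ) * Real.sqrt 2 / 2 : ℝ) : ℂ)
        + ((Real.sqrt (q : ℝ) * ((x3 : ℝ) + (x4 : ℝ) * Real.sqrt 2) / 2 : ℝ) : ℂ) * Complex.I)
    (hw : w = (((x1 : ℝ) - (x2 : ℝ) * Real.sqrt 2 + (x3 : ℝ) / 2
          - (x4 : ℝ) * Real.sqrt 2 / 2 : ℝ) : ℂ)
        + ((Real.sqrt (q : ℝ) * ((x3 : ℝ) - (x4 : ℝ) * Real.sqrt 2) / 2 : ℝ) : ℂ) * Complex.I) :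
    2 * (q : ℝ) ≤ ‖z‖ ^ 2 + ‖w‖ ^ 2 := by
  -- integer part
  set A : ℤ := 2 * x1 + x3 with hA_def
  set B : ℤ := 2 * x2 + x4 with hB_def
  obtain ⟨c, hc⟩ : q ∣ (-2 * x1 + j * (2 * x2 + x4)) - x3 := hx.dvd
  obtain ⟨d, hd⟩ : q ∣ (-2 : ℤ) - j ^ 2 := hj.dvd
  have hqS : q ∣ A ^ 2 + 2 * B ^ 2 :=
    ⟨-(A + j * B) * c - B ^ 2 * d, by
      rw [hA_def, hB_def]; linear_combination (-(2 * x1 + x3 + j * (2 * x2 + x4))) * hc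
        + (-(2 * x2 + x4) ^ 2) * hd⟩
  have hint : 4 * q ≤ A ^ 2 + 2 * B ^ 2 + q * (x3 ^ 2 + 2 * x4 ^ 2) :=
    keylem q A B x3 x4 hq hq8 hqS (by omega) (by omega) (by omega)
  -- real part
  have hq0 : (0 : ℝ) ≤ (q : ℝ) := by exact_mod_cast hq.le
  have hs : Real.sqrt 2 ^ 2 = 2 := Real.sq_sqrt (by norm_num)
  have hr : Real.sqrt (q : ℝ) ^ 2 = (q : ℝ) := Real.sq_sqrt hq0
  have hz2 : ‖z‖ ^ 2 + ‖w‖ ^ 2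
      = (((2 * x1 + x3 : ℤ) : ℝ) ^ 2 + 2 * ((2 * x2 + x4 : ℤ) : ℝ) ^ 2
        + (q : ℝ) * (((x3 : ℤ) : ℝ) ^ 2 + 2 * ((x4 : ℤ) : ℝ) ^ 2)) / 2 := by
    rw [hz, hw, Complex.sq_norm, Complex.sq_norm, Complex.normSq_add_mul_I,
      Complex.normSq_add_mul_I]
    push_cast
    linear_combination (2 * ((x2 : ℝ) + (x4 : ℝ) / 2) ^ 2
        + Real.sqrt (q : ℝ) ^ 2 * (x4 : ℝ) ^ 2 / 2) * hs
      + (((x3 : ℝ) ^ 2 / 2 + (x4 : ℝ) ^ 2)) * hr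
  have hcast : (4 * q : ℝ) ≤ ((2 * x1 + x3 : ℤ) : ℝ) ^ 2 + 2 * ((2 * x2 + x4 : ℤ) : ℝ) ^ 2
      + (q : ℝ) * (((x3 : ℤ) : ℝ) ^ 2 + 2 * ((x4 : ℤ) : ℝ) ^ 2) := by
    have := (Int.cast_le (R := ℝ)).mpr hint
    rw [hA_def, hB_def] at this
    push_cast at this ⊢
    linarith
  rw [hz2]
  push_cast at hcast ⊢
  linarith
end
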